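/- Let Q be a quiver with an order-2 automorphism τ. Then the folding of Q by the orbits of τ is valid: after any finite sequence of group mutations at τ-orbits, the resulting quiver still admits τ as an automorphism and each τ-orbit of size 2 has no arrow between its two nodes (so all subsequent group mutations are well-defined). -/
import Mathlib


/-- Quiver mutation at node `k`, encoded on skew-symmetric integer matrices. -/
def qMut {n : ℕ} (B : Matrix (Fin n) (Fin n) ℤ) (k : Fin n) : Matrix (Fin n) (Fin n) ℤ :=
  fun i j => if i = k ∨ j = k then -B i j
    else B i j + (|B i k| * B k j + B i k * |B k j|) / 2

/-- Group mutation at the `τ`-orbit of a node `k`: if the orbit is `{k}` this is the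
ordinary mutation at `k`; if the orbit is `{k, τ k}` it is the composition of the
mutations at `k` and `τ k`. -/
def groupMut {n : ℕ} (τ : Equiv.Perm (Fin n))
    (B : Matrix (Fin n) (Fin n) ℤ) (k : Fin n) : Matrix (Fin n) (Fin n) ℤ :=
  if τ k = k then qMut B k else qMut (qMut B k) (τ k)

lemma Edvd (x y : ℤ) : 2 ∣ |x| * y + x * |y| := by
  rcases le_total 0 x with hx | hx <;> rcases le_total 0 y with hy | hy
  · rw [abs_of_nonneg hx, abs_of_nonneg hy]; exact ⟨x * y, by ring⟩
  · rw [abs_of_nonneg hx, abs_of_nonpos hy]; exact ⟨0, by ring⟩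
  · rw [abs_of_nonpos hx, abs_of_nonneg hy]; exact ⟨0, by ring⟩
  · rw [abs_of_nonpos hx, abs_of_nonpos hy]; exact ⟨-(x * y), by ring⟩

lemma half_neg (m : ℤ) (h : 2 ∣ m) : (-m) / 2 = -(m / 2) := by omega

lemma qMut_skew {n : ℕ} (M : Matrix (Fin n) (Fin n) ℤ) (k : Fin n)
    (h : ∀ i j, M j i = -M i j) : ∀ i j, qMut M k j i = -(qMut M k i j) := by
  intro i j
  unfold qMut
  by_cases hc : i = k ∨ j = k
  · rw [if_pos hc, if_pos (Or.symm hc), h]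
  · rw [if_neg hc, if_neg (fun hc' => hc (Or.symm hc'))]
    have e1 : |M j k| * M k i + M j k * |M k i| =
        -(|M i k| * M k j + M i k * |M k j|) := by
      rw [h j k, h k i, abs_neg, abs_neg]; ring
    rw [h i j, e1, half_neg _ (Edvd _ _)]; ring

lemma qMut_conj {n : ℕ} (τ : Equiv.Perm (Fin n)) (hord2 : ∀ i, τ (τ i) = i)
    (M : Matrix (Fin n) (Fin n) ℤ) (k i j : Fin n) :
    qMut M k (τ i) (τ j) = qMut (fun a b => M (τ a) (τ b)) (τ k) i j := by
  unfold qMut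
  have h1 : (τ i = k ∨ τ j = k) ↔ (i = τ k ∨ j = τ k) := by
    constructor
    · rintro (h | h)
      · exact Or.inl (by rw [← h, hord2])
      · exact Or.inr (by rw [← h, hord2])
    · rintro (h | h)
      · exact Or.inl (by rw [h, hord2])
      · exact Or.inr (by rw [h, hord2])
  simp only [hord2]
  rw [if_congr h1 rfl rfl]

set_option linter.unnecessarySeqFocus false in
lemma qMut_comm {n : ℕ} (M : Matrix (Fin n) (Fin n) ℤ) (a b : Fin n) (hab : a ≠ b)
    (h1 : M a b = 0) (h2 : M b a = 0) :
    qMut (qMut M a) b = qMut (qMut M b) a := by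
  funext i j
  have hba : b ≠ a := hab.symm
  unfold qMut
  by_cases hia : i = a <;> by_cases hja : j = a <;>
    by_cases hib : i = b <;> by_cases hjb : j = b <;>
    simp_all <;> ring

lemma groupMut_skew {n : ℕ} (τ : Equiv.Perm (Fin n)) (M : Matrix (Fin n) (Fin n) ℤ)
    (k : Fin n) (h : ∀ i j, M j i = -M i j) :
    ∀ i j, groupMut τ M k j i = -(groupMut τ M k i j) := by
  unfold groupMut
  split
  · exact qMut_skew M k h
  · exact qMut_skew _ _ (qMut_skew M k h)

lemma groupMut_aut {n : ℕ} (τ : Equiv.Perm (Fin n)) (hord2 : ∀ i, τ (τ i) = i)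
    (M : Matrix (Fin n) (Fin n) ℤ) (k : Fin n)
    (h1 : ∀ i j, M j i = -M i j) (h2 : ∀ i j, M (τ i) (τ j) = M i j) :
    ∀ i j, groupMut τ M k (τ i) (τ j) = groupMut τ M k i j := by
  have hMc : (fun a b => M (τ a) (τ b)) = M := funext fun a => funext fun b => h2 a b
  intro i j
  unfold groupMut
  split
  · next hk => rw [qMut_conj τ hord2, hMc, hk]
  · next hk =>
    have hconj : (fun a b => qMut M k (τ a) (τ b)) = qMut M (τ k) := by
      funext a b
      rw [qMut_conj τ hord2, hMc]
    have hM0 : M (τ k) k = 0 := by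
      have e1 := h2 k (τ k)
      rw [hord2] at e1
      have e2 := h1 k (τ k)
      omega
    have hM0' : M k (τ k) = 0 := by
      have := h1 (τ k) k; omega
    calc qMut (qMut M k) (τ k) (τ i) (τ j)
        = qMut (fun a b => qMut M k (τ a) (τ b)) (τ (τ k)) i j := qMut_conj τ hord2 _ _ _ _
      _ = qMut (qMut M (τ k)) k i j := by rw [hconj, hord2]
      _ = qMut (qMut M k) (τ k) i j := by rw [qMut_comm M (τ k) k hk hM0 hM0']

/-- The folding of a quiver by an order-2 automorphism is valid: after any finite
sequence of group mutations at `τ`-orbits, `τ` is still an automorphism of the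
resulting quiver and each size-2 orbit has no arrow between its two nodes. -/
theorem order_two_folding_valid {n : ℕ} (B : Matrix (Fin n) (Fin n) ℤ)
    (τ : Equiv.Perm (Fin n))
    (hskew : ∀ i j, B j i = -B i j)
    (haut : ∀ i j, B (τ i) (τ j) = B i j)
    (hord2 : ∀ i, τ (τ i) = i)
    (ks : List (Fin n)) :
    (∀ i j, (ks.foldl (groupMut τ) B) (τ i) (τ j) = (ks.foldl (groupMut τ) B) i j) ∧
    (∀ i, τ i ≠ i → (ks.foldl (groupMut τ) B) i (τ i) = 0) := by
  have key : ∀ (ls : List (Fin n)) (M : Matrix (Fin n) (Fin n) ℤ),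
      (∀ i j, M j i = -M i j) → (∀ i j, M (τ i) (τ j) = M i j) →
      (∀ i j, (ls.foldl (groupMut τ) M) j i = -(ls.foldl (groupMut τ) M) i j) ∧
      (∀ i j, (ls.foldl (groupMut τ) M) (τ i) (τ j) = (ls.foldl (groupMut τ) M) i j) := by
    intro ls
    induction ls with
    | nil => intro M h1 h2; exact ⟨h1, h2⟩
    | cons k ks ih =>
      intro M h1 h2
      simp only [List.foldl_cons]
      exact ih (groupMut τ M k) (groupMut_skew τ M k h1) (groupMut_aut τ hord2 M k h1 h2)
  obtain ⟨hs, ha⟩ := key ks B hskew haut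
  refine ⟨ha, fun i _ => ?_⟩
  have e1 := ha i (τ i)
  rw [hord2] at e1
  have e2 := hs i (τ i)
  omega
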